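/- arXiv:2601.19808 — 3 statements merged into one kernel-verified Lean document; each statement's English description precedes it below -/
import Mathlib

section
/- (Classical Stampacchia lemma, case β = 1.) Let x₀ ∈ ℝ and let f : [x₀, ∞) → [0, ∞) be a nonincreasing function satisfying f(y) ≤ C (y − x)^{−α} f(x) whenever y > x ≥ x₀, where C > 0 and α > 0 are constants. Then f(y) ≤ e^{1 − ζ(y − x₀)} f(x₀) for all y ≥ x₀, where ζ := (eC)^{−1/α}. -/
/-!
Choose the step `h = (eC)^{1/α}`, so that `C / h^α = e⁻¹`: the recursive inequality then says that
each step of length `h` multiplies `f` by at most `e⁻¹`. Hence `f (x₀ + n h) ≤ e^{-n} f x₀`, and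
monotonicity interpolates between consecutive steps at the cost of one factor `e`.
-/

open Real Set

namespace AntitoneOn

variable {f : ℝ → ℝ} {x₀ h : ℝ}

theorem le_pow_floor_mul_of_step {q : ℝ} (hmono : AntitoneOn f (Ici x₀)) (hh : 0 < h)
    (hq : 0 ≤ q) (hstep : ∀ x, x₀ ≤ x → f (x + h) ≤ q * f x) {y : ℝ} (hy : x₀ ≤ y) :
    f y ≤ q ^ ⌊(y - x₀) / h⌋₊ * f x₀ := by
  set n := ⌊(y - x₀) / h⌋₊
  have hgrid : ∀ k : ℕ, x₀ ≤ x₀ + k * h := fun k => le_add_of_nonneg_right (by positivity)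
  have hn : x₀ + n * h ≤ y := by
    have := Nat.floor_le (div_nonneg (sub_nonneg.2 hy) hh.le)
    rw [le_div_iff₀ hh] at this
    linarith
  have hgeom : f (x₀ + n * h) ≤ q ^ n * f (x₀ + (0 : ℕ) * h) :=
    le_geom (u := fun k : ℕ => f (x₀ + k * h)) hq n fun k _ => by
      simpa only [Nat.cast_succ, add_mul, one_mul, ← add_assoc] using hstep _ (hgrid k)
  simp only [Nat.cast_zero, zero_mul, add_zero] at hgeom
  exact (hmono (hgrid n) hy hn).trans hgeom

theorem le_exp_mul_of_step {c : ℝ} (hmono : AntitoneOn f (Ici x₀)) (hh : 0 < h) (hc : 0 ≤ c)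
    (hstep : ∀ x, x₀ ≤ x → f (x + h) ≤ exp (-c) * f x) (hf : 0 ≤ f x₀) {y : ℝ}
    (hy : x₀ ≤ y) : f y ≤ exp (c * (1 - (y - x₀) / h)) * f x₀ := by
  refine (hmono.le_pow_floor_mul_of_step hh (exp_pos _).le hstep hy).trans ?_
  rw [← exp_nat_mul]
  refine mul_le_mul_of_nonneg_right (exp_le_exp.2 ?_) hf
  nlinarith [Nat.sub_one_lt_floor ((y - x₀) / h)]

end AntitoneOn

/-- Classical Stampacchia lemma, case `β = 1`: if `f : [x₀,∞) → [0,∞)` is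
nonincreasing and `f(y) ≤ C (y-x)^{-α} f(x)` for all `y > x ≥ x₀`, then
`f(y) ≤ e^{1 - ζ (y - x₀)} f(x₀)` for all `y ≥ x₀`, where `ζ = (eC)^{-1/α}`. -/
theorem stmt_10 (x₀ C α : ℝ) (hC : 0 < C) (hα : 0 < α)
    (f : ℝ → ℝ) (hf0 : ∀ x, x₀ ≤ x → 0 ≤ f x)
    (hmono : AntitoneOn f (Set.Ici x₀))
    (hrec : ∀ x y, x₀ ≤ x → x < y → f y ≤ C / (y - x) ^ α * f x) :
    ∀ y, x₀ ≤ y →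
      f y ≤ Real.exp (1 - (Real.exp 1 * C) ^ (-(1 / α)) * (y - x₀)) * f x₀ := by
  intro y hy
  have hE : 0 < exp 1 * C := by positivity
  set h := (exp 1 * C) ^ (1 / α)
  have hh : 0 < h := by positivity
  have hstep : ∀ x, x₀ ≤ x → f (x + h) ≤ exp (-1) * f x := fun x hx => by
    have hCh : C / h ^ α = exp (-1) := by
      rw [← rpow_mul hE.le, one_div_mul_cancel hα.ne', rpow_one, exp_neg]
      field_simp
    simpa only [add_sub_cancel_left, hCh] using hrec x (x + h) hx (by linarith)
  have hζ : (exp 1 * C) ^ (-(1 / α)) * (y - x₀) = (y - x₀) / h := by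
    rw [rpow_neg hE.le, inv_mul_eq_div]
  simpa only [hζ, one_mul] using
    hmono.le_exp_mul_of_step hh zero_le_one hstep (hf0 x₀ le_rfl) hy
end

section
/- (Classical Stampacchia lemma, case β < 1.) Let x₀ > 0 and let f : [x₀, ∞) → [0, ∞) be a nonincreasing function satisfying f(y) ≤ C (y − x)^{−α} f(x)^{β} whenever y > x ≥ x₀, where C > 0, α > 0 and 0 < β < 1 are constants. Then, with μ := α/(1 − β), one has f(y) ≤ 2^{μ/(1−β)} [ C^{1/(1−β)} + (2x₀)^{μ} f(x₀) ] y^{−μ} for all y ≥ x₀. -/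
/-- Classical Stampacchia lemma, case `β < 1`: if `x₀ > 0`, `f : [x₀,∞) → [0,∞)` is
nonincreasing and `f(y) ≤ C (y-x)^{-α} f(x)^β` for all `y > x ≥ x₀`, then with
`μ = α/(1-β)` one has
`f(y) ≤ 2^{μ/(1-β)} (C^{1/(1-β)} + (2x₀)^μ f(x₀)) y^{-μ}` for all `y ≥ x₀`. -/
theorem stmt_11 (x₀ C α β : ℝ) (hx₀ : 0 < x₀) (hC : 0 < C) (hα : 0 < α)
    (hβ : 0 < β) (hβ1 : β < 1)
    (f : ℝ → ℝ) (hf0 : ∀ x, x₀ ≤ x → 0 ≤ f x)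
    (hmono : AntitoneOn f (Set.Ici x₀))
    (hrec : ∀ x y, x₀ ≤ x → x < y → f y ≤ C / (y - x) ^ α * f x ^ β) :
    ∀ y, x₀ ≤ y →
      f y ≤ 2 ^ ((α / (1 - β)) / (1 - β)) *
        (C ^ (1 / (1 - β)) + (2 * x₀) ^ (α / (1 - β)) * f x₀) *
          y ^ (-(α / (1 - β))) := by
  set μ := α / (1 - β) with hμdef
  have hb : 0 < 1 - β := by linarith
  have hμ : 0 < μ := div_pos hα hb
  have hμα : μ * (1 - β) = α := div_mul_cancel₀ α hb.ne'
  set K := (2:ℝ) ^ (μ / (1 - β)) * (C ^ (1 / (1 - β)) + (2 * x₀) ^ μ * f x₀) with hKdef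
  have hfx₀ : 0 ≤ f x₀ := hf0 x₀ le_rfl
  have h2x₀ : (0:ℝ) < 2 * x₀ := by linarith
  have htwo : (1:ℝ) ≤ 2 ^ (μ / (1 - β)) :=
    Real.one_le_rpow one_le_two (le_of_lt (div_pos hμ hb))
  have hBnn : 0 ≤ (2 * x₀) ^ μ * f x₀ := mul_nonneg (Real.rpow_nonneg h2x₀.le μ) hfx₀
  have hCnn : (0:ℝ) < C ^ (1 / (1 - β)) := Real.rpow_pos_of_pos hC _
  have hKpos : 0 < K := by
    apply mul_pos (lt_of_lt_of_le one_pos htwo)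
    linarith
  -- K dominates (2x₀)^μ f(x₀)
  have hB : (2 * x₀) ^ μ * f x₀ ≤ K := by
    calc (2 * x₀) ^ μ * f x₀ ≤ 1 * (C ^ (1 / (1 - β)) + (2 * x₀) ^ μ * f x₀) := by
            rw [one_mul]; linarith
      _ ≤ K :=
            mul_le_mul_of_nonneg_right htwo (by linarith)
  -- K dominates (2^μ C)^{1/(1-β)}, giving the key inequality
  have hK2 : 2 ^ μ * C * K ^ β ≤ K := by
    have hA : (2:ℝ) ^ (μ / (1 - β)) * C ^ (1 / (1 - β)) ≤ K := by
      rw [hKdef, mul_add]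
      have h0 : 0 ≤ (2:ℝ) ^ (μ / (1 - β)) * ((2 * x₀) ^ μ * f x₀) :=
        mul_nonneg (by positivity) hBnn
      linarith
    have hAeq : (2:ℝ) ^ (μ / (1 - β)) * C ^ (1 / (1 - β)) = (2 ^ μ * C) ^ (1 / (1 - β)) := by
      rw [Real.mul_rpow (Real.rpow_nonneg (by norm_num) μ) hC.le,
        ← Real.rpow_mul (by norm_num : (0:ℝ) ≤ 2), mul_one_div]
    have h2C : (0:ℝ) < 2 ^ μ * C := mul_pos (Real.rpow_pos_of_pos two_pos μ) hC
    have hstep : (2:ℝ) ^ μ * C = ((2 ^ μ * C) ^ (1 / (1 - β))) ^ (1 - β) := by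
      rw [← Real.rpow_mul h2C.le, one_div, inv_mul_cancel₀ hb.ne', Real.rpow_one]
    calc 2 ^ μ * C * K ^ β = ((2 ^ μ * C) ^ (1 / (1 - β))) ^ (1 - β) * K ^ β := by
          rw [← hstep]
      _ ≤ K ^ (1 - β) * K ^ β := by
          apply mul_le_mul_of_nonneg_right
            (Real.rpow_le_rpow (Real.rpow_nonneg h2C.le _) (hAeq ▸ hA) hb.le)
            (Real.rpow_nonneg hKpos.le β)
      _ = K := by rw [← Real.rpow_add hKpos]; norm_num
  have main : ∀ n : ℕ, ∀ y, x₀ ≤ y → y ≤ 2 ^ (n+1) * x₀ → f y ≤ K * y ^ (-μ) := by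
    intro n
    induction n with
    | zero =>
      intro y hy hy2
      have hypos : 0 < y := lt_of_lt_of_le hx₀ hy
      have h1 : f y ≤ f x₀ := hmono (Set.mem_Ici.2 le_rfl) (Set.mem_Ici.2 hy) hy
      have h2 : y ^ μ ≤ (2 * x₀) ^ μ :=
        Real.rpow_le_rpow hypos.le (by norm_num at hy2; linarith) hμ.le
      have h3 : f x₀ * y ^ μ ≤ K := le_trans
        (mul_le_mul_of_nonneg_left h2 hfx₀) (by rw [mul_comm]; exact hB)
      have h4 : f y * y ^ μ ≤ K :=
        le_trans (mul_le_mul_of_nonneg_right h1 (Real.rpow_nonneg hypos.le μ)) h3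
      rw [Real.rpow_neg hypos.le, ← div_eq_mul_inv, le_div_iff₀ (Real.rpow_pos_of_pos hypos μ)]
      linarith
    | succ n ih =>
      intro y hy hy2
      by_cases hcase : y ≤ 2 ^ (n+1) * x₀
      · exact ih y hy hcase
      push_neg at hcase
      have hypos : 0 < y := lt_of_lt_of_le hx₀ hy
      have hpow1 : (2:ℝ) * x₀ ≤ 2 ^ (n+1) * x₀ := by
        apply mul_le_mul_of_nonneg_right _ hx₀.le
        calc (2:ℝ) = 2 ^ 1 := (pow_one 2).symm
          _ ≤ 2 ^ (n+1) := pow_le_pow_right₀ one_le_two (by omega)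
      have hx1 : x₀ ≤ y / 2 := by
        rw [le_div_iff₀ (by norm_num : (0:ℝ) < 2)]
        nlinarith
      have hx2 : y / 2 ≤ 2 ^ (n+1) * x₀ := by
        rw [div_le_iff₀ (by norm_num : (0:ℝ) < 2)]
        calc y ≤ 2 ^ (n+1+1) * x₀ := hy2
          _ = 2 ^ (n+1) * x₀ * 2 := by ring
      have hxpos : 0 < y / 2 := lt_of_lt_of_le hx₀ hx1
      have ihx : f (y/2) ≤ K * (y/2) ^ (-μ) := ih (y/2) hx1 hx2
      have hrecy : f y ≤ C / (y - y/2) ^ α * f (y/2) ^ β :=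
        hrec (y/2) y hx1 (by linarith)
      have hyy : y - y/2 = y/2 := by ring
      rw [hyy] at hrecy
      have hfx : 0 ≤ f (y/2) := hf0 _ hx1
      have h5 : f (y/2) ^ β ≤ (K * (y/2) ^ (-μ)) ^ β :=
        Real.rpow_le_rpow hfx ihx hβ.le
      have h6 : (K * (y/2) ^ (-μ)) ^ β = K ^ β * (y/2) ^ (-μ * β) := by
        rw [Real.mul_rpow hKpos.le (Real.rpow_nonneg hxpos.le _),
          ← Real.rpow_mul hxpos.le, neg_mul]
      have h7 : f y ≤ C / (y/2) ^ α * (K ^ β * (y/2) ^ (-μ * β)) := by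
        refine le_trans hrecy (mul_le_mul_of_nonneg_left (h6 ▸ h5) ?_)
        positivity
      have h8 : C / (y/2) ^ α * (K ^ β * (y/2) ^ (-μ * β)) = C * K ^ β * (y/2) ^ (-μ) := by
        rw [div_mul_eq_mul_div, div_eq_mul_inv, ← Real.rpow_neg hxpos.le]
        rw [show C * (K ^ β * (y/2) ^ (-μ * β)) * (y/2) ^ (-α)
            = C * K ^ β * ((y/2) ^ (-μ * β) * (y/2) ^ (-α)) by ring]
        rw [← Real.rpow_add hxpos]
        congr 2
        rw [← hμα]; ring
      have h9 : ((y:ℝ)/2) ^ (-μ) = 2 ^ μ * y ^ (-μ) := by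
        rw [Real.rpow_neg hxpos.le, Real.div_rpow hypos.le (by norm_num),
          Real.rpow_neg hypos.le]
        field_simp
      calc f y ≤ C * K ^ β * (y/2) ^ (-μ) := by rw [← h8]; exact h7
        _ = 2 ^ μ * C * K ^ β * y ^ (-μ) := by rw [h9]; ring
        _ ≤ K * y ^ (-μ) :=
          mul_le_mul_of_nonneg_right hK2 (Real.rpow_nonneg hypos.le _)
  intro y hy
  obtain ⟨n, hn⟩ := pow_unbounded_of_one_lt (y / x₀) (one_lt_two (α := ℝ))
  refine main n y hy ?_
  rw [div_lt_iff₀ hx₀] at hn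
  have : (2:ℝ) ^ n ≤ 2 ^ (n+1) := pow_le_pow_right₀ one_le_two (by omega)
  nlinarith
end

section
/- (Inhomogeneous Stampacchia lemma.) Let R > 0 and let f : [0, R] → [0, ∞) be a nonincreasing function such that f(ξ) ≤ c₀ (ξ − η)^{−α} ( f(η) + S̃ (R − η)^{α/(β−1)} )^{β} for all 0 ≤ η < ξ ≤ R, where S̃ ≥ 0, c₀ > 0, α > 0 and β > 1. Assume in addition that R^{α/(β−1)} ≥ ( 2^{β(α+β−1)/(β−1)} c₀ )^{1/(β−1)} ( f(0) + S̃ R^{α/(β−1)} ). Then f(R) = 0. -/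
/-- Inhomogeneous Stampacchia lemma: if `f : [0,R] → [0,∞)` is nonincreasing,
`f(ξ) ≤ c₀ (ξ-η)^{-α} (f(η) + S̃ (R-η)^{α/(β-1)})^β` for all `0 ≤ η < ξ ≤ R`,
and `R^{α/(β-1)} ≥ (2^{β(α+β-1)/(β-1)} c₀)^{1/(β-1)} (f(0) + S̃ R^{α/(β-1)})`,
then `f(R) = 0`. -/
theorem stmt_12 (R Stilde c₀ α β : ℝ) (hR : 0 < R) (hS : 0 ≤ Stilde)
    (hc₀ : 0 < c₀) (hα : 0 < α) (hβ : 1 < β)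
    (f : ℝ → ℝ) (hf0 : ∀ x ∈ Set.Icc (0 : ℝ) R, 0 ≤ f x)
    (hmono : AntitoneOn f (Set.Icc (0 : ℝ) R))
    (hrec : ∀ η ξ : ℝ, 0 ≤ η → η < ξ → ξ ≤ R →
      f ξ ≤ c₀ / (ξ - η) ^ α * (f η + Stilde * (R - η) ^ (α / (β - 1))) ^ β)
    (hcond : (2 ^ (β * (α + β - 1) / (β - 1)) * c₀) ^ (1 / (β - 1)) *
        (f 0 + Stilde * R ^ (α / (β - 1))) ≤ R ^ (α / (β - 1))) :
    f R = 0 := by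
  have hb : (0:ℝ) < β - 1 := by linarith
  set γ : ℝ := α / (β - 1) with hγdef
  have hγ : 0 < γ := div_pos hα hb
  have hf00 : 0 ≤ f 0 := hf0 0 ⟨le_rfl, hR.le⟩
  have hfR : 0 ≤ f R := hf0 R ⟨hR.le, le_rfl⟩
  have hRγ : 0 < R ^ γ := Real.rpow_pos_of_pos hR γ
  have hγβ : γ * β = γ + α := by
    rw [hγdef]; field_simp; ring
  set M : ℝ := f 0 + Stilde * R ^ γ with hMdef
  have hM0 : 0 ≤ M := by positivity
  -- case f 0 = 0
  rcases eq_or_lt_of_le hf00 with h0 | h0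
  · have hmR := hmono ⟨le_rfl, hR.le⟩ ⟨hR.le, le_rfl⟩ hR.le
    exact le_antisymm (by linarith) hfR
  have hM : 0 < M := by nlinarith [mul_nonneg hS hRγ.le]
  -- the key inequality derived from hcond
  have hkey : c₀ * M ^ (β - 1) * 2 ^ (β + α + γ) ≤ R ^ α := by
    have h1 := Real.rpow_le_rpow (by positivity) hcond hb.le
    rw [Real.mul_rpow (by positivity) hM0,
        ← Real.rpow_mul (by positivity : (0:ℝ) ≤ 2 ^ (β * (α + β - 1) / (β - 1)) * c₀),
        one_div_mul_cancel hb.ne', Real.rpow_one,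
        ← Real.rpow_mul hR.le] at h1
    have hE : β * (α + β - 1) / (β - 1) = β + α + γ := by
      rw [hγdef]; field_simp; ring
    have hga : γ * (β - 1) = α := by
      rw [hγdef]; field_simp
    rw [hE, hga] at h1
    calc c₀ * M ^ (β - 1) * 2 ^ (β + α + γ)
        = 2 ^ (β + α + γ) * c₀ * M ^ (β - 1) := by ring
      _ ≤ R ^ α := h1
  -- the iteration sequence
  set t : ℕ → ℝ := fun n => (2:ℝ) ^ (-(n:ℝ)) with htdef
  have ht_pos : ∀ n, 0 < t n := fun n => Real.rpow_pos_of_pos two_pos _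
  have ht_le1 : ∀ n, t n ≤ 1 := fun n =>
    Real.rpow_le_one_of_one_le_of_nonpos one_le_two (neg_nonpos.mpr (Nat.cast_nonneg n))
  have ht_half : ∀ n : ℕ, t n = 2 * t (n+1) := by
    intro n
    simp only [htdef]
    push_cast
    rw [show -((n:ℝ)) = -((n:ℝ)+1) + 1 by ring,
        Real.rpow_add_one (two_ne_zero) (-((n:ℝ)+1))]
    ring
  have e1 : ∀ (n : ℕ) (c : ℝ), (t n) ^ c = (2:ℝ) ^ (-(n:ℝ) * c) := by
    intro n c
    simp only [htdef]
    rw [Real.rpow_mul (by norm_num : (0:ℝ) ≤ 2)]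
  set ξ : ℕ → ℝ := fun n => R - R * t n with hξdef
  have hξ0 : ξ 0 = 0 := by
    simp [hξdef, htdef]
  have hξ_nonneg : ∀ n, 0 ≤ ξ n := by
    intro n
    simp only [hξdef, sub_nonneg]
    exact mul_le_of_le_one_right hR.le (ht_le1 n)
  have hξ_le : ∀ n, ξ n ≤ R := by
    intro n
    simp only [hξdef]
    nlinarith [mul_pos hR (ht_pos n)]
  have hξ_lt : ∀ n, ξ n < ξ (n+1) := by
    intro n
    simp only [hξdef]
    nlinarith [ht_half n, mul_pos hR (ht_pos (n+1))]
  have hdiff : ∀ n, ξ (n+1) - ξ n = R * t (n+1) := by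
    intro n
    simp only [hξdef]
    rw [ht_half n]; ring
  have hRt : ∀ n, R - ξ n = R * t n := by
    intro n
    simp only [hξdef]; ring
  have hMβ : M ^ β = M ^ (β - 1) * M := by
    rw [← Real.rpow_add_one hM.ne' (β - 1)]
    congr 1; ring
  -- the main induction
  have claim : ∀ n, f (ξ n) ≤ M * (t n) ^ γ := by
    intro n
    induction n with
    | zero =>
      have ht0 : t 0 = 1 := by simp [htdef]
      rw [hξ0, ht0, Real.one_rpow, mul_one]
      nlinarith [mul_nonneg hS hRγ.le]
    | succ n ih =>
      have hrec' := hrec (ξ n) (ξ (n+1)) (hξ_nonneg n) (hξ_lt n) (hξ_le (n+1))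
      rw [hdiff n, hRt n] at hrec'
      have hin0 : 0 ≤ f (ξ n) + Stilde * (R * t n) ^ γ := by
        have h1 := hf0 (ξ n) ⟨hξ_nonneg n, hξ_le n⟩
        have h2 : 0 ≤ Stilde * (R * t n) ^ γ := by positivity
        linarith
      have hin : f (ξ n) + Stilde * (R * t n) ^ γ ≤ 2 * M * (t n) ^ γ := by
        have h1 : (R * t n) ^ γ = R ^ γ * (t n) ^ γ :=
          Real.mul_rpow hR.le (ht_pos n).le
        have h2 : Stilde * R ^ γ ≤ M := by nlinarith
        have h3 : (0:ℝ) ≤ (t n) ^ γ := by positivity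
        nlinarith [mul_le_mul_of_nonneg_right h2 h3]
      have hpow : (f (ξ n) + Stilde * (R * t n) ^ γ) ^ β ≤ (2 * M * (t n) ^ γ) ^ β :=
        Real.rpow_le_rpow hin0 hin (by linarith)
      have E1 : (t n) ^ (γ * β) = (2:ℝ) ^ (-(n:ℝ) * (γ + α)) := by
        rw [e1 n (γ * β), hγβ]
      have E2 : (t (n+1)) ^ γ = (2:ℝ) ^ (-((n:ℝ)+1) * γ) := by
        rw [e1 (n+1) γ]; congr 1; push_cast; ring
      have E3 : (t (n+1)) ^ α = (2:ℝ) ^ (-((n:ℝ)+1) * α) := by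
        rw [e1 (n+1) α]; congr 1; push_cast; ring
      have hXβ : (2 * M * (t n) ^ γ) ^ β
          = 2 ^ β * (M ^ (β - 1) * M) * (2:ℝ) ^ (-(n:ℝ) * (γ + α)) := by
        rw [Real.mul_rpow (by positivity) (by positivity : (0:ℝ) ≤ (t n) ^ γ),
            Real.mul_rpow (by norm_num : (0:ℝ) ≤ 2) hM0,
            ← Real.rpow_mul (ht_pos n).le, E1, hMβ]
      calc f (ξ (n+1))
          ≤ c₀ / (R * t (n+1)) ^ α * (f (ξ n) + Stilde * (R * t n) ^ γ) ^ β := hrec'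
        _ ≤ c₀ / (R * t (n+1)) ^ α * (2 * M * (t n) ^ γ) ^ β := by
            apply mul_le_mul_of_nonneg_left hpow
            positivity
        _ ≤ M * (t (n+1)) ^ γ := by
            rw [Real.mul_rpow hR.le (ht_pos (n+1)).le, E3, E2, hXβ,
                div_mul_eq_mul_div, div_le_iff₀ (by positivity)]
            have p1 : (2:ℝ) ^ β * 2 ^ (-(n:ℝ) * (γ + α))
                = 2 ^ (β + α + γ) * 2 ^ (-((n:ℝ)+1) * (γ + α)) := by
              rw [← Real.rpow_add two_pos, ← Real.rpow_add two_pos]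
              congr 1; ring
            have p2 : (2:ℝ) ^ (-((n:ℝ)+1) * γ) * 2 ^ (-((n:ℝ)+1) * α)
                = 2 ^ (-((n:ℝ)+1) * (γ + α)) := by
              rw [← Real.rpow_add two_pos]
              congr 1; ring
            have key2 := mul_le_mul_of_nonneg_right hkey
              (show (0:ℝ) ≤ M * (2:ℝ) ^ (-((n:ℝ)+1) * (γ + α)) by positivity)
            calc c₀ * (2 ^ β * (M ^ (β - 1) * M) * (2:ℝ) ^ (-(n:ℝ) * (γ + α)))
                = (c₀ * M ^ (β - 1) * 2 ^ (β + α + γ))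
                    * (M * (2:ℝ) ^ (-((n:ℝ)+1) * (γ + α))) := by
                  linear_combination (c₀ * M ^ (β - 1) * M) * p1
              _ ≤ R ^ α * (M * (2:ℝ) ^ (-((n:ℝ)+1) * (γ + α))) := key2
              _ = M * (2:ℝ) ^ (-((n:ℝ)+1) * γ) * (R ^ α * (2:ℝ) ^ (-((n:ℝ)+1) * α)) := by
                  linear_combination (M * R ^ α) * p2.symm
  -- pass to the limit
  have hlim : ∀ n, f R ≤ M * (t n) ^ γ := fun n =>
    le_trans (hmono ⟨hξ_nonneg n, hξ_le n⟩ ⟨hR.le, le_rfl⟩ (hξ_le n)) (claim n)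
  have hgeom : ∀ n : ℕ, M * (t n) ^ γ = M * ((2:ℝ) ^ (-γ)) ^ n := by
    intro n
    congr 1
    rw [e1 n γ, ← Real.rpow_natCast ((2:ℝ) ^ (-γ)) n, ← Real.rpow_mul (by norm_num : (0:ℝ) ≤ 2)]
    congr 1; ring
  have hr1 : (2:ℝ) ^ (-γ) < 1 :=
    Real.rpow_lt_one_of_one_lt_of_neg one_lt_two (neg_neg_of_pos hγ)
  have hr0 : (0:ℝ) ≤ (2:ℝ) ^ (-γ) := (Real.rpow_pos_of_pos two_pos _).le
  have hT : Filter.Tendsto (fun n : ℕ => M * ((2:ℝ) ^ (-γ)) ^ n) Filter.atTop (nhds 0) := by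
    have := (tendsto_pow_atTop_nhds_zero_of_lt_one hr0 hr1).const_mul M
    simpa using this
  have hfinal : f R ≤ 0 := by
    refine ge_of_tendsto' hT ?_
    intro n
    rw [← hgeom n]
    exact hlim n
  exact le_antisymm hfinal hfR
end
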